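/- In the width-4 string flip dynamics, the regions of confinement of type-0 and type-3 particles are disjoint: R_S(0) ∩ R_S(3) = ∅. -/

import Mathlib

/-- A single flip: the values at two adjacent sites, which differ by exactly 1,
are swapped; all other sites are unchanged. -/
def FlipStep {N k : ℕ} (c c' : Fin N → Fin k) : Prop :=
  ∃ j j' : Fin N, j.val + 1 = j'.val ∧
    ((c j').val = (c j).val + 1 ∨ (c j).val = (c j').val + 1) ∧
    c' j = c j' ∧ c' j' = c j ∧ ∀ i : Fin N, i ≠ j → i ≠ j' → c' i = c i

/-- Two configurations are in the same sector iff they are related by finitely many flips. -/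
def SameSector {N k : ℕ} (c c' : Fin N → Fin k) : Prop :=
  Relation.ReflTransGen FlipStep c c'

/-- The region of confinement of type-`n` particles in the sector of `c`:
all sites that a type-`n` particle can occupy in some configuration of the sector. -/
def RoC {N k : ℕ} (c : Fin N → Fin k) (n : Fin k) : Set (Fin N) :=
  {j | ∃ c', SameSector c c' ∧ c' j = n}

namespace RoCAux

open Finset

variable {N : ℕ}

/-- Swap of the two positions `j`, `j'`. -/
def swp (j j' i : Fin N) : Fin N := if i = j then j' else if i = j' then j else i

lemma swp_invol (j j' i : Fin N) : swp j j' (swp j j' i) = i := by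
  rcases eq_or_ne i j with h1 | h1
  · rcases eq_or_ne j' j with h2 | h2 <;> simp [swp, h1, h2]
  · rcases eq_or_ne i j' with h2 | h2 <;> simp [swp, h1, h2]

lemma swp_left (j j' : Fin N) : swp j j' j = j' := by simp [swp]

lemma swp_right {j j' : Fin N} (hne : j ≠ j') : swp j j' j' = j := by
  simp [swp, hne.symm]

lemma swp_lt_iff {j j' : Fin N} (hjj : j.val + 1 = j'.val) (a t : Fin N)
    (h1 : ¬(a = j ∧ t = j')) (h2 : ¬(a = j' ∧ t = j)) :
    swp j j' a < swp j j' t ↔ a < t := by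
  unfold swp
  split_ifs with g1 g2 g3 g4 g5 g6 g7 g8 <;>
    simp only [Fin.lt_def, Fin.ext_iff, not_and] at * <;> omega

lemma swp_eq_left {j j' : Fin N} (hne : j ≠ j') {a : Fin N} (h : swp j j' a = j') : a = j := by
  unfold swp at h
  split_ifs at h with g1 g2
  · exact g1
  · exact absurd h hne
  · exact absurd h g2

lemma swp_eq_right {j j' : Fin N} (hne : j ≠ j') {a : Fin N} (h : swp j j' a = j) : a = j' := by
  unfold swp at h
  split_ifs at h with g1 g2
  · exact absurd h hne.symm
  · exact g2
  · exact absurd h g1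

/-- Number of sites strictly left of `p` whose value satisfies `P`. -/
def cnt (P : Fin 4 → Prop) [DecidablePred P] (d : Fin N → Fin 4) (p : Fin N) : ℕ :=
  #(univ.filter fun i => i < p ∧ P (d i))

lemma cnt_mono (P : Fin 4 → Prop) [DecidablePred P] (d : Fin N → Fin 4) {p q : Fin N}
    (h : p ≤ q) : cnt P d p ≤ cnt P d q := by
  apply card_le_card
  intro i hi
  simp only [mem_filter, mem_univ, true_and] at *
  exact ⟨lt_of_lt_of_le hi.1 h, hi.2⟩

lemma cnt_lt (P : Fin 4 → Prop) [DecidablePred P] (d : Fin N → Fin 4) {p q : Fin N}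
    (h : p < q) (hP : P (d p)) : cnt P d p < cnt P d q := by
  apply card_lt_card
  constructor
  · intro i hi
    simp only [mem_filter, mem_univ, true_and] at *
    exact ⟨lt_trans hi.1 h, hi.2⟩
  · intro hsub
    have hp : p ∈ univ.filter fun i => i < q ∧ P (d i) := by
      simp only [mem_filter, mem_univ, true_and]; exact ⟨h, hP⟩
    have := hsub hp
    simp only [mem_filter, mem_univ, true_and] at this
    exact absurd this.1 (lt_irrefl p)

/-- The key single-flip counting invariance. -/
lemma cnt_swp (P : Fin 4 → Prop) [DecidablePred P] {c c' : Fin N → Fin 4} {j j' : Fin N}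
    (hjj : j.val + 1 = j'.val) (hcc : ∀ i, c' (swp j j' i) = c i) (a : Fin N)
    (hside : a = j ∨ a = j' → ¬ P (c j) ∧ ¬ P (c j')) :
    cnt P c a = cnt P c' (swp j j' a) := by
  have hne : j ≠ j' := by
    intro h; rw [h] at hjj; omega
  have hcc' : ∀ i, c (swp j j' i) = c' i := by
    intro i
    have h := hcc (swp j j' i)
    rw [swp_invol] at h
    exact h.symm
  have hc'j : c' j = c j' := by
    have h := hcc' j; rw [swp_left] at h; exact h.symm
  have hc'j' : c' j' = c j := by
    have h := hcc' j'; rw [swp_right hne] at h; exact h.symm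
  apply card_nbij' (swp j j') (swp j j')
  · intro i hi
    simp only [mem_coe, mem_filter, mem_univ, true_and] at *
    refine ⟨?_, by rw [hcc i]; exact hi.2⟩
    refine (swp_lt_iff hjj i a ?_ ?_).mpr hi.1
    · rintro ⟨hij, haj'⟩
      exact (hside (Or.inr haj')).1 (hij ▸ hi.2)
    · rintro ⟨hij, haj⟩
      exact (hside (Or.inl haj)).2 (hij ▸ hi.2)
  · intro i hi
    simp only [mem_coe, mem_filter, mem_univ, true_and] at *
    refine ⟨?_, by rw [hcc' i]; exact hi.2⟩
    have hx : swp j j' i < swp j j' (swp j j' a) := by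
      refine (swp_lt_iff hjj i (swp j j' a) ?_ ?_).mpr hi.1
      · rintro ⟨hij, hsw⟩
        have ha : a = j := swp_eq_left hne hsw
        exact (hside (Or.inl ha)).2 (hc'j ▸ (hij ▸ hi.2))
      · rintro ⟨hij, hsw⟩
        have ha : a = j' := swp_eq_right hne hsw
        exact (hside (Or.inr ha)).1 (hc'j' ▸ (hij ▸ hi.2))
    rwa [swp_invol] at hx
  · intro i _; exact swp_invol j j' i
  · intro i _; exact swp_invol j j' i

abbrev hiC (d : Fin N → Fin 4) (p : Fin N) : ℕ := cnt (fun v => 2 ≤ v.val) d p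
abbrev loC (d : Fin N → Fin 4) (p : Fin N) : ℕ := cnt (fun v => v.val ≤ 1) d p

lemma hi_add_lo (d : Fin N → Fin 4) (p : Fin N) : hiC d p + loC d p = p.val := by
  unfold hiC loC cnt
  rw [card_filter, card_filter, ← Finset.sum_add_distrib]
  have hcongr : ∀ i ∈ (univ : Finset (Fin N)),
      ((if i < p ∧ 2 ≤ (d i).val then 1 else 0) + (if i < p ∧ (d i).val ≤ 1 then 1 else 0))
        = if i < p then (1:ℕ) else 0 := by
    intro i _
    by_cases h : i < p
    · simp only [h, true_and, if_true]
      split_ifs <;> omega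
    · simp [h]
  rw [Finset.sum_congr rfl hcongr, ← card_filter]
  have he : (univ.filter fun i : Fin N => i < p) = Finset.Iio p := by
    ext i; simp [Finset.mem_Iio]
  rw [he, Fin.card_Iio]

/-- The matching invariant between two configurations of the same sector. -/
def Match (c c' : Fin N → Fin 4) : Prop :=
  ∃ σ τ : Fin N → Fin N,
    (∀ a, c a = 0 → c' (σ a) = 0 ∧ hiC c a = hiC c' (σ a)) ∧
    (∀ b, c' b = 3 → c (τ b) = 3 ∧ loC c (τ b) = loC c' b) ∧
    ∀ a b, c a = 0 → c' b = 3 → (a < τ b ↔ σ a < b)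

lemma match_refl (c : Fin N → Fin 4) : Match c c :=
  ⟨id, id, fun _ h => ⟨h, rfl⟩, fun _ h => ⟨h, rfl⟩, fun _ _ _ _ => Iff.rfl⟩

lemma match_trans {c d e : Fin N → Fin 4} (h1 : Match c d) (h2 : Match d e) : Match c e := by
  obtain ⟨σ1, τ1, H01, H31, HO1⟩ := h1
  obtain ⟨σ2, τ2, H02, H32, HO2⟩ := h2
  refine ⟨σ2 ∘ σ1, τ1 ∘ τ2, ?_, ?_, ?_⟩
  · intro a ha
    obtain ⟨ha1, ha2⟩ := H01 a ha
    obtain ⟨ha3, ha4⟩ := H02 _ ha1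
    exact ⟨ha3, ha2.trans ha4⟩
  · intro b hb
    obtain ⟨hb1, hb2⟩ := H32 b hb
    obtain ⟨hb3, hb4⟩ := H31 _ hb1
    exact ⟨hb3, hb4.trans hb2⟩
  · intro a b ha hb
    have k1 := HO1 a (τ2 b) ha (H32 b hb).1
    have k2 := HO2 (σ1 a) b (H01 a ha).1 hb
    exact k1.trans k2

lemma match_flip {c c' : Fin N → Fin 4} (h : FlipStep c c') : Match c c' := by
  obtain ⟨j, j', hjj, hdiff, e1, e2, heq⟩ := h
  have hne : j ≠ j' := by intro h; rw [h] at hjj; omega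
  have hcc : ∀ i, c' (swp j j' i) = c i := by
    intro i
    by_cases h1 : i = j
    · rw [h1, swp_left, e2]
    · by_cases h2 : i = j'
      · rw [h2, swp_right hne, e1]
      · rw [show swp j j' i = i by unfold swp; simp [h1, h2]]; exact heq i h1 h2
  have hcc' : ∀ i, c (swp j j' i) = c' i := by
    intro i; have h := hcc (swp j j' i); rw [swp_invol] at h; exact h.symm
  have hv4 : (c j).val < 4 := (c j).isLt
  have hv4' : (c j').val < 4 := (c j').isLt
  refine ⟨swp j j', swp j j', ?_, ?_, ?_⟩
  · intro a ha
    refine ⟨by rw [hcc a, ha], ?_⟩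
    apply cnt_swp _ hjj hcc
    rintro (h | h)
    · have hv : (c j).val = 0 := by rw [← h, ha]; rfl
      have hv' : (c j').val = 1 := by omega
      exact ⟨by show ¬ 2 ≤ (c j).val; omega, by show ¬ 2 ≤ (c j').val; omega⟩
    · have hv : (c j').val = 0 := by rw [← h, ha]; rfl
      have hv' : (c j).val = 1 := by omega
      exact ⟨by show ¬ 2 ≤ (c j).val; omega, by show ¬ 2 ≤ (c j').val; omega⟩
  · intro b hb
    have hτ3 : c (swp j j' b) = 3 := by rw [hcc' b, hb]
    refine ⟨hτ3, ?_⟩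
    have key := cnt_swp (fun v => v.val ≤ 1) hjj hcc (swp j j' b) ?side
    · rwa [swp_invol] at key
    case side =>
      rintro (hsw | hsw)
      · have hv : (c j).val = 3 := by rw [← hsw, hτ3]; rfl
        have hv' : (c j').val = 2 := by omega
        exact ⟨by show ¬ (c j).val ≤ 1; omega, by show ¬ (c j').val ≤ 1; omega⟩
      · have hv : (c j').val = 3 := by rw [← hsw, hτ3]; rfl
        have hv' : (c j).val = 2 := by omega
        exact ⟨by show ¬ (c j).val ≤ 1; omega, by show ¬ (c j').val ≤ 1; omega⟩
  · intro a b ha hb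
    have ht3 : c (swp j j' b) = 3 := by rw [hcc' b, hb]
    have h1 : ¬(a = j ∧ swp j j' b = j') := by
      rintro ⟨haj, hsw⟩
      have k0 : (c j).val = 0 := by rw [← haj, ha]; rfl
      have k3 : (c j').val = 3 := by rw [← hsw, ht3]; rfl
      omega
    have h2 : ¬(a = j' ∧ swp j j' b = j) := by
      rintro ⟨haj, hsw⟩
      have k0 : (c j').val = 0 := by rw [← haj, ha]; rfl
      have k3 : (c j).val = 3 := by rw [← hsw, ht3]; rfl
      omega
    constructor
    · intro hlt
      have hx := (swp_lt_iff hjj a (swp j j' b) h1 h2).mpr hlt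
      rwa [swp_invol] at hx
    · intro hlt
      have hlt' : swp j j' a < swp j j' (swp j j' b) := by rwa [swp_invol]
      exact (swp_lt_iff hjj a (swp j j' b) h1 h2).mp hlt'

lemma sector_match {c c' : Fin N → Fin 4} (h : SameSector c c') : Match c c' := by
  induction h with
  | refl => exact match_refl c
  | tail _ hstep ih => exact match_trans ih (match_flip hstep)

lemma flip_symm : Symmetric (@FlipStep N 4) := by
  rintro c c' ⟨j, j', hjj, hdiff, e1, e2, heq⟩
  refine ⟨j, j', hjj, ?_, e2.symm, e1.symm, fun i h1 h2 => (heq i h1 h2).symm⟩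
  rw [e1, e2]
  exact hdiff.symm

lemma no_overlap {c1 c2 : Fin N → Fin 4} (h : Match c1 c2) {p : Fin N}
    (h1 : c1 p = 0) (h2 : c2 p = 3) : False := by
  obtain ⟨σ, τ, H0, H3, HO⟩ := h
  obtain ⟨hσ0, hσh⟩ := H0 p h1
  obtain ⟨hτ3, hτl⟩ := H3 p h2
  have hiff := HO p p h1 h2
  have hal1 := hi_add_lo c1 p
  have hal2 := hi_add_lo c2 p
  have hal1' := hi_add_lo c1 (τ p)
  have hal2' := hi_add_lo c2 (σ p)
  have htp : τ p ≠ p := by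
    intro hh; rw [hh, h1] at hτ3; exact absurd hτ3 (by decide)
  have hsp : σ p ≠ p := by
    intro hh; rw [hh, h2] at hσ0; exact absurd hσ0 (by decide)
  by_cases hc : p < τ p
  · have hσlt : σ p < p := hiff.mp hc
    have l1 : loC c1 p < loC c1 (τ p) :=
      cnt_lt _ c1 hc (by show (c1 p).val ≤ 1; rw [h1]; decide)
    have l2 : hiC c2 (σ p) ≤ hiC c2 p :=
      cnt_mono _ c2 (le_of_lt hσlt)
    rw [hτl] at l1
    rw [← hσh] at l2
    omega
  · have htlt : τ p < p := lt_of_le_of_ne (not_lt.mp hc) htp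
    have hple : ¬ σ p < p := fun hh => hc (hiff.mpr hh)
    have hplt : p < σ p := lt_of_le_of_ne (not_lt.mp hple) (Ne.symm hsp)
    have l1 : loC c1 (τ p) ≤ loC c1 p := cnt_mono _ c1 htlt.le
    have l2 : hiC c2 p < hiC c2 (σ p) :=
      cnt_lt _ c2 hplt (by show 2 ≤ (c2 p).val; rw [h2]; decide)
    rw [hτl] at l1
    rw [← hσh] at l2
    omega

end RoCAux

/-- In a width-4 sector (containing both a type-0 and a type-3 particle), the regions
of confinement of type-0 and type-3 particles are disjoint: `R_S(0) ∩ R_S(3) = ∅`. -/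
theorem RoC_zero_inter_RoC_three_eq_empty {N : ℕ} (c : Fin N → Fin 4)
    (h0 : ∃ j, c j = 0) (h3 : ∃ j, c j = 3) :
    RoC c 0 ∩ RoC c 3 = ∅ := by
  rw [Set.eq_empty_iff_forall_notMem]
  rintro j ⟨⟨c1, s1, e1⟩, ⟨c2, s2, e2⟩⟩
  have hsym : Symmetric (Relation.ReflTransGen (@FlipStep N 4)) := fun a b h =>
    (@Relation.ReflTransGen.stdSymm _ _ ⟨fun x y hxy => RoCAux.flip_symm hxy⟩).symm a b h
  have hsec : SameSector c1 c2 := Relation.ReflTransGen.trans (hsym s1) s2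
  exact RoCAux.no_overlap (RoCAux.sector_match hsec) e1 e2
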